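/- For the Marchenko–Pastur law H with γ > 1, (σ²/γ)·(∫ (1/s) dH(s) − ∫ 1/(s + σ²) dH(s)) = σ⁴/(γ(1 − 1/γ)³) + o(σ⁴) as σ → 0. -/

import Mathlib

open MeasureTheory Real Filter
open scoped NNReal ENNReal

/-- Lower edge `λ₋ = (1 − 1/√γ)²` of the Marchenko–Pastur law. -/
noncomputable def lamM (γ : ℝ) : ℝ := (1 - 1 / Real.sqrt γ) ^ 2

/-- Upper edge `λ₊ = (1 + 1/√γ)²` of the Marchenko–Pastur law. -/
noncomputable def lamP (γ : ℝ) : ℝ := (1 + 1 / Real.sqrt γ) ^ 2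

/-- The Marchenko–Pastur law with aspect ratio `γ > 1`:
`dH(s) = (γ/(2π))·√((λ₊ − s)(s − λ₋))/s · 𝟙_{[λ₋,λ₊]}(s) ds`. -/
noncomputable def MPlaw (γ : ℝ) : Measure ℝ :=
  MeasureTheory.volume.withDensity fun s =>
    ENNReal.ofReal (if lamM γ ≤ s ∧ s ≤ lamP γ then
      γ / (2 * Real.pi) * Real.sqrt ((lamP γ - s) * (s - lamM γ)) / s else 0)


lemma key_deriv {a b : ℝ} (ha : 0 < a) (hab : a < b) (s : ℝ) (hs : s ∈ Set.Ioo a b) :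
    HasDerivAt (fun s => Real.sqrt ((b - s) * (s - a)) * (((a+b) * s - 2 * (a*b)) / (4 * (a*b) * s ^ 2))
      + (b-a) ^ 2 / (8 * (a*b) * Real.sqrt (a*b)) * Real.arcsin (((a+b) * s - 2 * (a*b)) / ((b-a) * s)))
      (Real.sqrt ((b - s) * (s - a)) / s ^ 3) s := by
  have hb : 0 < b := ha.trans hab
  have hq : 0 < a * b := mul_pos ha hb
  set p : ℝ := a + b with hp
  set q : ℝ := a * b with hqdef
  set d : ℝ := b - a with hd
  have hd0 : 0 < d := sub_pos.2 hab
  set sq : ℝ := Real.sqrt q with hsq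
  have hsq0 : 0 < sq := Real.sqrt_pos.2 hq
  have hsq2 : sq ^ 2 = q := Real.sq_sqrt hq.le
  have hs0 : 0 < s := ha.trans hs.1
  have hu : 0 < (b - s) * (s - a) := mul_pos (sub_pos.2 hs.2) (sub_pos.2 hs.1)
  set r : ℝ := Real.sqrt ((b - s) * (s - a)) with hr
  have hr0 : 0 < r := Real.sqrt_pos.2 hu
  have hr2 : r ^ 2 = (b - s) * (s - a) := Real.sq_sqrt hu.le
  have h1 : HasDerivAt (fun s : ℝ => (b - s) * (s - a)) (p - 2 * s) s := by
    have h := ((hasDerivAt_id s).const_sub b).mul ((hasDerivAt_id s).sub_const a)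
    simp only [id_eq] at h
    exact h.congr_deriv (by ring)
  have h2 : HasDerivAt (fun s => Real.sqrt ((b - s) * (s - a))) ((p - 2 * s) / (2 * r)) s :=
    h1.sqrt hu.ne'
  have hnum : HasDerivAt (fun s : ℝ => p * s - 2 * q) p s := by
    simpa using ((hasDerivAt_id s).const_mul p).sub_const (2 * q)
  have h3 : HasDerivAt (fun s : ℝ => (p * s - 2 * q) / (4 * q * s ^ 2))
      ((4 * q - p * s) / (4 * q * s ^ 3)) s := by
    have hden : HasDerivAt (fun s : ℝ => 4 * q * s ^ 2) (4 * q * (2 * s)) s := by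
      simpa using ((hasDerivAt_pow 2 s).const_mul (4 * q))
    have := hnum.div hden (by positivity)
    refine this.congr_deriv ?_
    field_simp
    ring
  have hnum' : (d * s) ^ 2 - (p * s - 2 * q) ^ 2 = 4 * q * ((b - s) * (s - a)) := by
    rw [hp, hqdef, hd]; ring
  have hyy : (2 * sq * r) ^ 2 = 4 * q * ((b - s) * (s - a)) := by
    rw [mul_pow, mul_pow, hsq2, hr2]; ring
  have hid : 1 - ((p * s - 2 * q) / (d * s)) ^ 2 = (2 * sq * r / (d * s)) ^ 2 := by
    rw [div_pow, div_pow, eq_div_iff (by positivity : ((d*s)^2 : ℝ) ≠ 0), sub_mul, one_mul,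
      div_mul_cancel₀ _ (by positivity : ((d*s)^2 : ℝ) ≠ 0), hyy, ← hnum']
  have hpos2 : 0 < (2 * sq * r / (d * s)) ^ 2 := by positivity
  have hne1 : (p * s - 2 * q) / (d * s) ≠ 1 := by
    intro h; rw [h] at hid; simp at hid; nlinarith
  have hnem1 : (p * s - 2 * q) / (d * s) ≠ -1 := by
    intro h; rw [h] at hid; norm_num at hid; nlinarith
  have hg : HasDerivAt (fun s : ℝ => (p * s - 2 * q) / (d * s)) (2 * q / (d * s ^ 2)) s := by
    have hden : HasDerivAt (fun s : ℝ => d * s) d s := by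
      simpa using (hasDerivAt_id s).const_mul d
    have := hnum.div hden (by positivity)
    refine this.congr_deriv ?_
    field_simp
    ring
  have harcsin : HasDerivAt (fun s : ℝ => Real.arcsin ((p * s - 2 * q) / (d * s)))
      (d * s / (2 * sq * r) * (2 * q / (d * s ^ 2))) s := by
    have := (Real.hasDerivAt_arcsin hnem1 hne1).comp s hg
    refine this.congr_deriv ?_
    rw [hid, Real.sqrt_sq (by positivity), one_div_div]
  have Htot := (h2.mul h3).add (harcsin.const_mul (d ^ 2 / (8 * q * sq)))
  refine Htot.congr_deriv ?_
  have hterm3 : d ^ 2 / (8 * q * sq) * (d * s / (2 * sq * r) * (2 * q / (d * s ^ 2)))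
      = d ^ 2 * s ^ 2 / (8 * q * r * s ^ 3) := by
    rw [div_mul_div_comm, div_mul_div_comm]
    rw [show (8 * q * sq) * (2 * sq * r * (d * s ^ 2)) = 16 * q * sq ^ 2 * r * d * s ^ 2 by ring,
      hsq2]
    rw [div_eq_div_iff (by positivity) (by positivity)]
    ring
  have hterm1 : (p - 2 * s) / (2 * r) * ((p * s - 2 * q) / (4 * q * s ^ 2))
      = (p - 2 * s) * (p * s - 2 * q) * s / (8 * q * r * s ^ 3) := by
    rw [div_mul_div_comm, div_eq_div_iff (by positivity) (by positivity)]
    ring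
  have hterm2 : r * ((4 * q - p * s) / (4 * q * s ^ 3))
      = 2 * r ^ 2 * (4 * q - p * s) / (8 * q * r * s ^ 3) := by
    rw [mul_div_assoc', div_eq_div_iff (by positivity) (by positivity)]
    ring
  have hkey : (p - 2 * s) * (p * s - 2 * q) * s + 2 * r ^ 2 * (4 * q - p * s) + d ^ 2 * s ^ 2
      = 8 * q * r ^ 2 := by
    rw [hr2, hp, hqdef, hd]; ring
  rw [hterm1, hterm2, hterm3, ← add_div, ← add_div, hkey,
    show 8 * q * r ^ 2 = (8 * q * r) * r by ring,
    show 8 * q * r * s ^ 3 = (8 * q * r) * s ^ 3 by ring,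
    mul_div_mul_left _ _ (by positivity : (8 * q * r : ℝ) ≠ 0)]

lemma key_integral {a b : ℝ} (ha : 0 < a) (hab : a < b) :
    ∫ s in a..b, Real.sqrt ((b - s) * (s - a)) / s ^ 3
      = Real.pi * (b - a) ^ 2 / (8 * Real.sqrt (a * b) ^ 3) := by
  have hb : 0 < b := ha.trans hab
  have hq : 0 < a * b := mul_pos ha hb
  have hsq0 : 0 < Real.sqrt (a * b) := Real.sqrt_pos.2 hq
  have hsq2 : Real.sqrt (a * b) ^ 2 = a * b := Real.sq_sqrt hq.le
  set F : ℝ → ℝ := fun s => Real.sqrt ((b - s) * (s - a)) * (((a+b) * s - 2 * (a*b)) / (4 * (a*b) * s ^ 2))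
      + (b-a) ^ 2 / (8 * (a*b) * Real.sqrt (a*b)) * Real.arcsin (((a+b) * s - 2 * (a*b)) / ((b-a) * s))
      with hF
  have hs0 : ∀ s ∈ Set.Icc a b, s ≠ 0 := fun s hs => (ha.trans_le hs.1).ne'
  have hcont : ContinuousOn F (Set.Icc a b) := by
    apply ContinuousOn.add
    · apply ContinuousOn.mul
      · exact (Real.continuous_sqrt.comp (by continuity)).continuousOn
      · exact ContinuousOn.div (by fun_prop) (by fun_prop)
          (fun s hs => by have := hs0 s hs; positivity)
    · exact ContinuousOn.mul continuousOn_const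
        (Real.continuous_arcsin.comp_continuousOn
          (ContinuousOn.div (by fun_prop) (by fun_prop)
            (fun s hs => by have h1 := hs0 s hs; have h2 := sub_pos.2 hab; positivity)))
  have hint : IntervalIntegrable (fun s => Real.sqrt ((b - s) * (s - a)) / s ^ 3) volume a b := by
    apply ContinuousOn.intervalIntegrable
    rw [Set.uIcc_of_le hab.le]
    exact ContinuousOn.div (Real.continuous_sqrt.comp (by continuity)).continuousOn
      (by fun_prop) (fun s hs => by have := hs0 s hs; positivity)
  have heval := intervalIntegral.integral_eq_sub_of_hasDeriv_right_of_le hab.le hcont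
    (fun s hs => (key_deriv ha hab s hs).hasDerivWithinAt) hint
  rw [heval]
  have hd0 : (0:ℝ) < b - a := sub_pos.2 hab
  have hFb : F b = (b-a) ^ 2 / (8 * (a*b) * Real.sqrt (a*b)) * (Real.pi / 2) := by
    have h1 : ((a+b) * b - 2 * (a*b)) / ((b-a) * b) = 1 := by
      rw [div_eq_one_iff_eq (by positivity)]; ring
    have h2 : (b - b) * (b - a) = 0 := by ring
    simp [hF, h1, h2, Real.arcsin_one]
  have hFa : F a = (b-a) ^ 2 / (8 * (a*b) * Real.sqrt (a*b)) * (-(Real.pi / 2)) := by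
    have h1 : ((a+b) * a - 2 * (a*b)) / ((b-a) * a) = -1 := by
      rw [div_eq_iff (by positivity)]; ring
    have h2 : (b - a) * (a - a) = 0 := by ring
    simp [hF, h1, h2, Real.arcsin_neg_one]
  rw [hFb, hFa]
  rw [show Real.sqrt (a*b) ^ 3 = (a*b) * Real.sqrt (a*b) by rw [pow_succ, hsq2]]
  field_simp
  ring

section facts
variable {γ : ℝ} (hγ : 1 < γ)

noncomputable def densR (γ : ℝ) : ℝ → ℝ := fun s =>
  if lamM γ ≤ s ∧ s ≤ lamP γ then
    γ / (2 * Real.pi) * Real.sqrt ((lamP γ - s) * (s - lamM γ)) / s else 0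

lemma MPlaw_eq (γ : ℝ) : MPlaw γ
    = MeasureTheory.volume.withDensity fun s => ((Real.toNNReal (densR γ s) : ℝ≥0) : ℝ≥0∞) := rfl

lemma sqrt_gamma_gt (hγ : 1 < γ) : 1 < Real.sqrt γ := by
  rw [show (1:ℝ) = Real.sqrt 1 by simp]
  exact Real.sqrt_lt_sqrt (by norm_num) hγ

lemma inv_sqrt_lt (hγ : 1 < γ) : 1 / Real.sqrt γ < 1 := by
  rw [div_lt_one (by linarith [sqrt_gamma_gt hγ])]; exact sqrt_gamma_gt hγ

lemma inv_sqrt_pos (hγ : 1 < γ) : 0 < 1 / Real.sqrt γ := by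
  have := sqrt_gamma_gt hγ; positivity

lemma lamM_pos (hγ : 1 < γ) : 0 < lamM γ := by
  have := inv_sqrt_lt hγ; unfold lamM; nlinarith

lemma lamM_lt_lamP (hγ : 1 < γ) : lamM γ < lamP γ := by
  have h1 := inv_sqrt_lt hγ; have h2 := inv_sqrt_pos hγ
  unfold lamM lamP; nlinarith

lemma densR_nonneg (hγ : 1 < γ) (s : ℝ) : 0 ≤ densR γ s := by
  unfold densR
  split_ifs with h
  · have hs : 0 < s := lt_of_lt_of_le (lamM_pos hγ) h.1
    have h0 : (0:ℝ) < γ := by linarith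
    have hπ := Real.pi_pos
    positivity
  · exact le_refl _

lemma densR_measurable (γ : ℝ) : Measurable (densR γ) := by
  unfold densR
  refine Measurable.ite ?_ ?_ measurable_const
  · exact (measurableSet_Icc (a := lamM γ) (b := lamP γ))
  · exact ((measurable_const.mul
      (Real.continuous_sqrt.measurable.comp (by fun_prop))).div measurable_id)

lemma MP_integral (hγ : 1 < γ) (g : ℝ → ℝ) :
    ∫ s, g s ∂(MPlaw γ) = ∫ s in (lamM γ)..(lamP γ),
      (γ / (2 * Real.pi) * Real.sqrt ((lamP γ - s) * (s - lamM γ)) / s) * g s := by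
  rw [MPlaw_eq, integral_withDensity_eq_integral_smul
    ((densR_measurable γ).real_toNNReal) g]
  have : ∀ s, (Real.toNNReal (densR γ s) : ℝ≥0) • g s
      = Set.indicator (Set.Icc (lamM γ) (lamP γ))
        (fun s => (γ / (2 * Real.pi) * Real.sqrt ((lamP γ - s) * (s - lamM γ)) / s) * g s) s := by
    intro s
    rw [NNReal.smul_def, Real.coe_toNNReal _ (densR_nonneg hγ s)]
    unfold densR
    by_cases h : lamM γ ≤ s ∧ s ≤ lamP γ
    · rw [if_pos h, Set.indicator_of_mem (by exact h), smul_eq_mul]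
    · rw [if_neg h, Set.indicator_of_notMem (by exact h), zero_smul]
  simp_rw [this]
  rw [MeasureTheory.integral_indicator measurableSet_Icc,
    MeasureTheory.integral_Icc_eq_integral_Ioc,
    ← intervalIntegral.integral_of_le (lamM_lt_lamP hγ).le]

lemma MP_ae (hγ : 1 < γ) : ∀ᵐ s ∂(MPlaw γ), s ∈ Set.Icc (lamM γ) (lamP γ) := by
  rw [MeasureTheory.ae_iff]
  have hms : MeasurableSet {s : ℝ | ¬ s ∈ Set.Icc (lamM γ) (lamP γ)} :=
    measurableSet_Icc.compl
  rw [MPlaw_eq, MeasureTheory.withDensity_apply _ hms]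
  have : ∀ s ∈ {s : ℝ | ¬ s ∈ Set.Icc (lamM γ) (lamP γ)},
      ((Real.toNNReal (densR γ s) : ℝ≥0) : ℝ≥0∞) = 0 := by
    intro s hs
    have : ¬ (lamM γ ≤ s ∧ s ≤ lamP γ) := hs
    simp [densR, this]
  rw [MeasureTheory.setLIntegral_congr_fun hms this]
  simp

lemma MP_finite (hγ : 1 < γ) : IsFiniteMeasure (MPlaw γ) := by
  constructor
  set A := lamM γ; set B := lamP γ
  have hA := lamM_pos hγ
  have hB : (0:ℝ) < B := hA.trans (lamM_lt_lamP hγ)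
  have hπ := Real.pi_pos
  have h0 : (0:ℝ) < γ := by linarith
  set C : ℝ := γ / (2 * Real.pi) * (B / A) with hC
  have hle : ∀ s, ((Real.toNNReal (densR γ s) : ℝ≥0) : ℝ≥0∞)
      ≤ Set.indicator (Set.Icc A B) (fun _ => ENNReal.ofReal C) s := by
    intro s
    by_cases h : A ≤ s ∧ s ≤ B
    · rw [Set.indicator_of_mem (by exact h)]
      have hs : 0 < s := hA.trans_le h.1
      have hsqle : Real.sqrt ((B - s) * (s - A)) ≤ B := by
        have h1 : (B - s) * (s - A) ≤ B ^ 2 := by nlinarith [h.1, h.2]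
        calc Real.sqrt ((B - s) * (s - A)) ≤ Real.sqrt (B ^ 2) := Real.sqrt_le_sqrt h1
          _ = B := Real.sqrt_sq hB.le
      have : densR γ s ≤ C := by
        rw [densR, if_pos h, hC, mul_div_assoc]
        apply mul_le_mul_of_nonneg_left _ (by positivity)
        exact div_le_div₀ hB.le hsqle hA h.1
      calc ((Real.toNNReal (densR γ s) : ℝ≥0) : ℝ≥0∞) = ENNReal.ofReal (densR γ s) := rfl
        _ ≤ ENNReal.ofReal C := ENNReal.ofReal_le_ofReal this
    · have : densR γ s = 0 := by unfold densR; exact if_neg h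
      simp [this]
  calc MPlaw γ Set.univ = ∫⁻ s, ((Real.toNNReal (densR γ s) : ℝ≥0) : ℝ≥0∞) := by
        rw [MPlaw_eq, MeasureTheory.withDensity_apply _ MeasurableSet.univ,
          MeasureTheory.setLIntegral_univ]
    _ ≤ ∫⁻ s, Set.indicator (Set.Icc A B) (fun _ => ENNReal.ofReal C) s :=
        MeasureTheory.lintegral_mono hle
    _ = ENNReal.ofReal C * volume (Set.Icc A B) := by
        rw [MeasureTheory.lintegral_indicator measurableSet_Icc]
        simp
    _ < ⊤ := by
        apply ENNReal.mul_lt_top ENNReal.ofReal_lt_top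
        rw [Real.volume_Icc]; exact ENNReal.ofReal_lt_top

end facts

section main
variable {γ : ℝ}

lemma integrable_bdd (hγ : 1 < γ) {f : ℝ → ℝ} (hf : Measurable f) (C : ℝ)
    (h : ∀ s ∈ Set.Icc (lamM γ) (lamP γ), ‖f s‖ ≤ C) : Integrable f (MPlaw γ) := by
  haveI := MP_finite hγ
  exact Integrable.mono' (integrable_const C) hf.aestronglyMeasurable
    ((MP_ae hγ).mono fun s hs => h s hs)

set_option maxHeartbeats 1000000 in
/-- `(σ²/γ)(∫ 1/s dH − ∫ 1/(s + σ²) dH) = σ⁴/(γ(1 − 1/γ)³) + o(σ⁴)` as `σ → 0⁺`,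
stated as the limit of the ratio with `σ⁴`. -/
theorem stmt14 (γ : ℝ) (hγ : 1 < γ) :
    Tendsto (fun σ : ℝ =>
        (σ ^ 2 / γ) * ((∫ s, 1 / s ∂(MPlaw γ)) - ∫ s, 1 / (s + σ ^ 2) ∂(MPlaw γ)) / σ ^ 4)
      (nhdsWithin 0 (Set.Ioi 0)) (nhds (1 / (γ * (1 - 1 / γ) ^ 3))) := by
  haveI := MP_finite hγ
  set A := lamM γ with hAdef
  set B := lamP γ with hBdef
  have hA : 0 < A := lamM_pos hγ
  have hAB : A < B := lamM_lt_lamP hγ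
  have hB : 0 < B := hA.trans hAB
  have h0 : (0:ℝ) < γ := by linarith
  have hπ := Real.pi_pos
  -- value of ∫ 1/s² dH
  have hsg : 0 < Real.sqrt γ := Real.sqrt_pos.2 h0
  have hsg2 : Real.sqrt γ ^ 2 = γ := Real.sq_sqrt h0.le
  have hprod : A * B = (1 - 1 / γ) ^ 2 := by
    rw [hAdef, hBdef, lamM, lamP]
    have : (1 / Real.sqrt γ) ^ 2 = 1 / γ := by
      rw [div_pow, one_pow, hsg2]
    nlinarith [this]
  have hdiff : B - A = 4 / Real.sqrt γ := by
    rw [hAdef, hBdef, lamM, lamP]; ring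
  have hinv : 0 < 1 - 1 / γ := by
    have : 1 / γ < 1 := by rw [div_lt_one h0]; exact hγ
    linarith
  have hsqrtAB : Real.sqrt (A * B) = 1 - 1 / γ := by
    rw [hprod, Real.sqrt_sq hinv.le]
  have hI2 : (∫ s, 1 / s ^ 2 ∂(MPlaw γ)) = 1 / (1 - 1/γ) ^ 3 := by
    rw [MP_integral hγ]
    have hfeq : (fun s => (γ / (2 * Real.pi) * Real.sqrt ((B - s) * (s - A)) / s) * (1 / s ^ 2))
        = fun s => (γ / (2 * Real.pi)) * (Real.sqrt ((B - s) * (s - A)) / s ^ 3) := by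
      funext s
      rw [div_mul_div_comm, mul_one, show s * s ^ 2 = s ^ 3 by ring, mul_div_assoc]
    rw [hfeq, intervalIntegral.integral_const_mul, key_integral hA hAB, hsqrtAB, hdiff]
    rw [div_pow, hsg2, eq_div_iff (by positivity : ((1:ℝ) - 1/γ) ^ 3 ≠ 0)]
    have hγ1 : (0:ℝ) < γ - 1 := by linarith
    field_simp
    ring
  -- dominated convergence
  have hmeas : ∀ σ : ℝ, Measurable (fun s : ℝ => 1 / (s * (s + σ ^ 2))) := by
    intro σ
    exact measurable_const.div (measurable_id.mul (measurable_id.add_const _))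
  have hJ : Tendsto (fun σ : ℝ => ∫ s, 1 / (s * (s + σ ^ 2)) ∂(MPlaw γ))
      (nhdsWithin 0 (Set.Ioi 0)) (nhds (∫ s, 1 / s ^ 2 ∂(MPlaw γ))) := by
    apply MeasureTheory.tendsto_integral_filter_of_dominated_convergence
      (bound := fun _ => 1 / A ^ 2)
    · exact Filter.Eventually.of_forall fun σ => (hmeas σ).aestronglyMeasurable
    · filter_upwards [self_mem_nhdsWithin] with σ (hσ : 0 < σ)
      filter_upwards [MP_ae hγ] with s hs
      have hsA : A ≤ s := hs.1
      have hs0 : 0 < s := hA.trans_le hsA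
      have h1 : A * A ≤ s * (s + σ ^ 2) := by nlinarith [sq_nonneg σ]
      have h2 : (0:ℝ) < s * (s + σ ^ 2) := by nlinarith [sq_nonneg σ]
      rw [Real.norm_eq_abs, abs_of_nonneg (by positivity)]
      calc 1 / (s * (s + σ ^ 2)) ≤ 1 / (A * A) := by
            apply one_div_le_one_div_of_le (by positivity) h1
        _ = 1 / A ^ 2 := by ring
    · exact integrable_const _
    · filter_upwards [MP_ae hγ] with s hs
      have hs0 : 0 < s := hA.trans_le hs.1
      have t1 : Tendsto (fun σ : ℝ => σ ^ 2) (nhdsWithin 0 (Set.Ioi 0)) (nhds 0) := by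
        have h := ((continuous_pow 2).tendsto (0:ℝ)).mono_left
          (nhdsWithin_le_nhds (s := Set.Ioi (0:ℝ)))
        simpa using h
      have t2 : Tendsto (fun σ : ℝ => s * (s + σ ^ 2)) (nhdsWithin 0 (Set.Ioi 0))
          (nhds (s * s)) := by
        have h2 : Tendsto (fun σ : ℝ => s + σ ^ 2) (nhdsWithin 0 (Set.Ioi 0))
            (nhds (s + 0)) := Tendsto.const_add s t1
        rw [add_zero] at h2
        exact Tendsto.const_mul s h2
      have t3 : Tendsto (fun σ : ℝ => 1 / (s * (s + σ ^ 2))) (nhdsWithin 0 (Set.Ioi 0))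
          (nhds (1 / (s * s))) :=
        Tendsto.div tendsto_const_nhds t2 (by positivity)
      convert t3 using 2
      rw [sq]
  -- eventual equality of the expression
  have hEq : ∀ᶠ σ in nhdsWithin (0:ℝ) (Set.Ioi 0),
      (σ ^ 2 / γ) * ((∫ s, 1 / s ∂(MPlaw γ)) - ∫ s, 1 / (s + σ ^ 2) ∂(MPlaw γ)) / σ ^ 4
        = (∫ s, 1 / (s * (s + σ ^ 2)) ∂(MPlaw γ)) / γ := by
    filter_upwards [self_mem_nhdsWithin] with σ (hσ : 0 < σ)
    have h1 : Integrable (fun s : ℝ => 1 / s) (MPlaw γ) := by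
      apply integrable_bdd hγ (f := fun s : ℝ => 1 / s) (by fun_prop) (1 / A)
      intro s hs
      have hs0 : 0 < s := hA.trans_le hs.1
      rw [Real.norm_eq_abs, abs_of_nonneg (by positivity)]
      exact one_div_le_one_div_of_le hA hs.1
    have h2 : Integrable (fun s : ℝ => 1 / (s + σ ^ 2)) (MPlaw γ) := by
      apply integrable_bdd hγ (f := fun s : ℝ => 1 / (s + σ ^ 2)) (by fun_prop) (1 / A)
      intro s hs
      have hs0 : 0 < s := hA.trans_le hs.1
      have hpos : (0:ℝ) < s + σ ^ 2 := by positivity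
      rw [Real.norm_eq_abs, abs_of_nonneg (by positivity)]
      apply one_div_le_one_div_of_le hA
      nlinarith [sq_nonneg σ, hs.1]
    have hsub : (∫ s, 1 / s ∂(MPlaw γ)) - ∫ s, 1 / (s + σ ^ 2) ∂(MPlaw γ)
        = ∫ s, (1 / s - 1 / (s + σ ^ 2)) ∂(MPlaw γ) := (integral_sub h1 h2).symm
    have hcongr : (∫ s, (1 / s - 1 / (s + σ ^ 2)) ∂(MPlaw γ))
        = ∫ s, σ ^ 2 * (1 / (s * (s + σ ^ 2))) ∂(MPlaw γ) := by
      apply integral_congr_ae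
      filter_upwards [MP_ae hγ] with s hs
      have hs0 : 0 < s := hA.trans_le hs.1
      have hs1 : (0:ℝ) < s + σ ^ 2 := by positivity
      field_simp
      ring
    rw [hsub, hcongr, MeasureTheory.integral_const_mul]
    have hσ0 : σ ≠ 0 := ne_of_gt hσ
    field_simp
  -- conclude
  have hlim : Tendsto (fun σ : ℝ => (∫ s, 1 / (s * (s + σ ^ 2)) ∂(MPlaw γ)) / γ)
      (nhdsWithin 0 (Set.Ioi 0)) (nhds ((1 / (1 - 1/γ) ^ 3) / γ)) := by
    rw [← hI2]
    exact hJ.div_const γ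
  have : (1 / (1 - 1/γ) ^ 3) / γ = 1 / (γ * (1 - 1 / γ) ^ 3) := by
    field_simp
  rw [this] at hlim
  apply Tendsto.congr' _ hlim
  filter_upwards [hEq] with σ h
  exact h.symm

end main
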